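/- arXiv:1605.03608 — 3 statements merged into one kernel-verified Lean document; each statement's English description precedes it below -/
import Mathlib

section
/- The center of distances of the Cantor ternary set is {0} ∪ {2/3^n : n ≥ 1}. -/
/-!
Write `C` for the set of subsums of `2 / 3 ^ (n + 1)`. It lies in `[0, 1]` and is self-similar:
`C = C / 3 ∪ (2 / 3 + C / 3)`, so it misses `(1/3, 2/3)` and `3x ∈ C` for `x ∈ C ∩ [0, 2/3)`.
Each term `2 / 3 ^ (n + 1)` is a center distance: adding or removing the `n`-th term of a subsum
moves it by exactly that amount. Conversely a center distance `α` is a distance from `0`, so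
`α ∈ C`; if `α > 1/3` then `α ≥ 2/3`, while every point of `C` is within `2/3` of `1/3`, so
`α = 2/3`. If `α ≤ 1/3`, then `3α` is again a center distance: a partner of `x / 3` at distance `α`
lies in `C ∩ [0, 2/3)`, hence tripling it gives a partner of `x` at distance `3α` (the only
exception, `x = 1` and `α = 1/3`, is covered by `0`). Tripling a positive `α` eventually
exceeds `1/3`, which pins `α` down to `2 / 3 ^ (n + 1)`.
-/

noncomputable def centerOfDistances (X : Set ℝ) : Set ℝ :=
  {α | 0 ≤ α ∧ ∀ x ∈ X, ∃ y ∈ X, |x - y| = α}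

noncomputable def subsums (a : ℕ → ℝ) : Set ℝ :=
  {x | ∃ A : Set ℕ, x = ∑' n : A, a n}

noncomputable def cantorval : Set ℝ :=
  {x | ∃ d : ℕ → ℝ, (∀ n, d n ∈ ({0, 2, 3, 5} : Set ℝ)) ∧
    x = ∑' n : ℕ, d n / 4 ^ (n + 1)}

open Set

section Subsums

variable {a : ℕ → ℝ}

theorem zero_mem_subsums : (0 : ℝ) ∈ subsums a := ⟨∅, by simp⟩

theorem tsum_mem_subsums : ∑' n, a n ∈ subsums a := ⟨univ, (tsum_univ a).symm⟩

theorem subsums_div (c : ℝ) : subsums (fun n => a n / c) = (· / c) '' subsums a := by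
  ext x
  simp only [subsums, mem_ofPred_eq, mem_image, tsum_div_const]
  constructor
  · rintro ⟨A, rfl⟩
    exact ⟨_, ⟨A, rfl⟩, rfl⟩
  · rintro ⟨_, ⟨A, rfl⟩, rfl⟩
    exact ⟨A, rfl⟩

theorem subsums_subset_Icc (ha : Summable a) (h0 : 0 ≤ a) :
    subsums a ⊆ Icc 0 (∑' n, a n) := by
  rintro _ ⟨A, rfl⟩
  exact ⟨tsum_nonneg fun n => h0 n, ha.tsum_subtype_le a A h0⟩

theorem Summable.tsum_subtype_insert (ha : Summable a) {A : Set ℕ} {n : ℕ} (hn : n ∉ A) :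
    ∑' k : ↥(insert n A), a k = a n + ∑' k : A, a k := by
  rw [insert_eq, ha.subtype _ |>.tsum_union_disjoint (disjoint_singleton_left.2 hn)
    (ha.subtype _), tsum_singleton]

theorem Summable.tsum_subtype_eq_indicator_zero_add (ha : Summable a) (A : Set ℕ) :
    ∑' n : A, a n = A.indicator a 0 + ∑' n : ↥{n | n + 1 ∈ A}, a ((n : ℕ) + 1) := by
  rw [tsum_subtype, tsum_subtype _ fun n => a (n + 1), (ha.indicator A).tsum_eq_zero_add]
  rfl

theorem Summable.mem_subsums_iff_succ (ha : Summable a) {x : ℝ} :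
    x ∈ subsums a ↔ ∃ y ∈ subsums (fun n => a (n + 1)), x = y ∨ x = a 0 + y := by
  constructor
  · rintro ⟨A, rfl⟩
    refine ⟨_, ⟨{n | n + 1 ∈ A}, rfl⟩, ?_⟩
    rw [ha.tsum_subtype_eq_indicator_zero_add A]
    by_cases h : 0 ∈ A <;> simp [h]
  · rintro ⟨_, ⟨B, rfl⟩, rfl | rfl⟩
    · refine ⟨(· + 1) '' B, ?_⟩
      have hB : {n | n + 1 ∈ (· + 1) '' B} = B := by ext; simp
      rw [ha.tsum_subtype_eq_indicator_zero_add, hB]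
      simp
    · refine ⟨insert 0 ((· + 1) '' B), ?_⟩
      have hB : {n | n + 1 ∈ insert 0 ((· + 1) '' B)} = B := by ext; simp
      rw [ha.tsum_subtype_eq_indicator_zero_add, hB]
      simp

theorem Summable.mem_centerOfDistances_subsums (ha : Summable a) {n : ℕ} (hn : 0 ≤ a n) :
    a n ∈ centerOfDistances (subsums a) := by
  refine ⟨hn, ?_⟩
  rintro _ ⟨A, rfl⟩
  by_cases h : n ∈ A
  · have hA := ha.tsum_subtype_insert (A := A \ {n}) fun h' => h'.2 rfl
    rw [insert_sdiff_singleton, insert_eq_of_mem h] at hA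
    refine ⟨_, ⟨A \ {n}, rfl⟩, ?_⟩
    rw [hA, add_sub_cancel_right, abs_of_nonneg hn]
  · refine ⟨_, ⟨insert n A, rfl⟩, ?_⟩
    rw [ha.tsum_subtype_insert h, sub_add_cancel_right, abs_neg, abs_of_nonneg hn]

end Subsums

theorem zero_mem_centerOfDistances (X : Set ℝ) : 0 ∈ centerOfDistances X :=
  ⟨le_rfl, fun x hx => ⟨x, hx, by simp⟩⟩

theorem centerOfDistances_subset_self {X : Set ℝ} (h0 : 0 ∈ X) (hX : ∀ x ∈ X, 0 ≤ x) :
    centerOfDistances X ⊆ X := by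
  rintro α ⟨-, hα⟩
  obtain ⟨y, hy, hy0⟩ := hα 0 h0
  rwa [← hy0, zero_sub, abs_neg, abs_of_nonneg (hX y hy)]

noncomputable def cantorTerm (n : ℕ) : ℝ := 2 / 3 ^ (n + 1)

local notation "𝒞" => subsums cantorTerm

theorem cantorTerm_pos (n : ℕ) : 0 < cantorTerm n := by
  unfold cantorTerm; positivity

theorem cantorTerm_succ (n : ℕ) : cantorTerm (n + 1) = cantorTerm n / 3 := by
  simp only [cantorTerm, pow_succ]; ring

theorem hasSum_cantorTerm : HasSum cantorTerm 1 := by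
  have h := (hasSum_geometric_of_lt_one (r := (3⁻¹ : ℝ)) (by norm_num) (by norm_num)).mul_left
    (2 / 3)
  have hf : cantorTerm = fun n => 2 / 3 * 3⁻¹ ^ n := by
    funext n; rw [cantorTerm, pow_succ, inv_pow]; ring
  rwa [hf, show (1 : ℝ) = 2 / 3 * (1 - 3⁻¹)⁻¹ by norm_num]

theorem summable_cantorTerm : Summable cantorTerm := hasSum_cantorTerm.summable

theorem mem_cantor_iff {x : ℝ} : x ∈ 𝒞 ↔ ∃ y ∈ 𝒞, x = y / 3 ∨ x = 2 / 3 + y / 3 := by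
  rw [summable_cantorTerm.mem_subsums_iff_succ]
  simp only [cantorTerm_succ, subsums_div, exists_mem_image]
  norm_num [cantorTerm]

theorem cantor_subset_Icc : 𝒞 ⊆ Icc 0 1 := by
  simpa [hasSum_cantorTerm.tsum_eq] using
    subsums_subset_Icc summable_cantorTerm fun n => (cantorTerm_pos n).le

theorem one_mem_cantor : (1 : ℝ) ∈ 𝒞 := hasSum_cantorTerm.tsum_eq ▸ tsum_mem_subsums

theorem div_three_mem_cantor {x : ℝ} (hx : x ∈ 𝒞) : x / 3 ∈ 𝒞 :=
  mem_cantor_iff.2 ⟨x, hx, Or.inl rfl⟩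

theorem le_or_le_of_mem_cantor {x : ℝ} (hx : x ∈ 𝒞) : x ≤ 1 / 3 ∨ 2 / 3 ≤ x := by
  obtain ⟨y, hy, rfl | rfl⟩ := mem_cantor_iff.1 hx
  · exact Or.inl (by linarith [(cantor_subset_Icc hy).2])
  · exact Or.inr (by linarith [(cantor_subset_Icc hy).1])

theorem three_mul_mem_cantor {x : ℝ} (hx : x ∈ 𝒞) (h : x < 2 / 3) : 3 * x ∈ 𝒞 := by
  obtain ⟨y, hy, rfl | rfl⟩ := mem_cantor_iff.1 hx
  · rwa [mul_div_cancel₀ y three_ne_zero]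
  · linarith [(cantor_subset_Icc hy).1]

theorem mem_cantor_of_mem_centerOfDistances {α : ℝ} (hα : α ∈ centerOfDistances 𝒞) : α ∈ 𝒞 :=
  centerOfDistances_subset_self zero_mem_subsums (fun _ hx => (cantor_subset_Icc hx).1) hα

theorem eq_two_thirds_of_mem_centerOfDistances_cantor {α : ℝ} (hα : α ∈ centerOfDistances 𝒞)
    (h : 1 / 3 < α) : α = 2 / 3 := by
  have h23 : 2 / 3 ≤ α :=
    (le_or_le_of_mem_cantor (mem_cantor_of_mem_centerOfDistances hα)).resolve_left h.not_ge
  obtain ⟨y, hy, hyα⟩ := hα.2 (1 / 3) (by simpa using div_three_mem_cantor one_mem_cantor)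
  obtain ⟨hy0, hy1⟩ := cantor_subset_Icc hy
  have : |1 / 3 - y| ≤ 2 / 3 := abs_le.2 ⟨by linarith, by linarith⟩
  linarith

theorem three_mul_mem_centerOfDistances_cantor {α : ℝ} (hα : α ∈ centerOfDistances 𝒞)
    (h : α ≤ 1 / 3) : 3 * α ∈ centerOfDistances 𝒞 := by
  refine ⟨by linarith [hα.1], fun x hx => ?_⟩
  obtain ⟨hx0, hx1⟩ := cantor_subset_Icc hx
  obtain ⟨y, hy, hyα⟩ := hα.2 (x / 3) (div_three_mem_cantor hx)
  rcases lt_or_ge y (2 / 3) with hy23 | hy23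
  · refine ⟨3 * y, three_mul_mem_cantor hy hy23, ?_⟩
    rw [← hyα, show x - 3 * y = 3 * (x / 3 - y) by ring, abs_mul,
      abs_of_pos (three_pos : (0 : ℝ) < 3)]
  · -- the gap forces `y = 2 / 3`, `x = 1` and `α = 1 / 3`
    have hyx : |x / 3 - y| = y - x / 3 := by rw [abs_sub_comm, abs_of_nonneg (by linarith)]
    refine ⟨0, zero_mem_subsums, ?_⟩
    rw [sub_zero, abs_of_nonneg hx0]
    linarith

theorem exists_eq_cantorTerm_of_one_lt_pow_mul {α : ℝ} (hα : α ∈ centerOfDistances 𝒞) {n : ℕ}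
    (hn : 1 < 3 ^ n * α) : ∃ m, α = cantorTerm m := by
  induction n generalizing α with
  | zero =>
    have := (cantor_subset_Icc (mem_cantor_of_mem_centerOfDistances hα)).2
    rw [pow_zero, one_mul] at hn
    linarith
  | succ k ih =>
    rcases lt_or_ge (1 / 3) α with h | h
    · exact ⟨0, by rw [eq_two_thirds_of_mem_centerOfDistances_cantor hα h]; norm_num [cantorTerm]⟩
    · obtain ⟨m, hm⟩ := ih (three_mul_mem_centerOfDistances_cantor hα h)
        (by rwa [pow_succ, mul_assoc] at hn)
      exact ⟨m + 1, by rw [cantorTerm_succ, ← hm]; ring⟩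

theorem exists_eq_cantorTerm_of_mem_centerOfDistances {α : ℝ} (hα : α ∈ centerOfDistances 𝒞)
    (h : 0 < α) : ∃ n, α = cantorTerm n := by
  obtain ⟨n, hn⟩ := pow_unbounded_of_one_lt α⁻¹ (by norm_num : (1 : ℝ) < 3)
  exact exists_eq_cantorTerm_of_one_lt_pow_mul hα ((inv_lt_iff_one_lt_mul₀ h).1 hn)

theorem stmt5 :
    centerOfDistances (subsums (fun n => (2 : ℝ) / 3 ^ (n + 1))) =
      {0} ∪ {t : ℝ | ∃ n : ℕ, t = 2 / 3 ^ (n + 1)} := by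
  change centerOfDistances 𝒞 = {0} ∪ {t | ∃ n, t = cantorTerm n}
  ext α
  constructor
  · intro hα
    rcases hα.1.eq_or_lt with h | h
    · exact Or.inl h.symm
    · exact Or.inr (exists_eq_cantorTerm_of_mem_centerOfDistances hα h)
  · rintro (rfl | ⟨n, rfl⟩)
    · exact zero_mem_centerOfDistances _
    · exact summable_cantorTerm.mem_centerOfDistances_subsums (cantorTerm_pos n).le
end

section
/- The Cantorval X = { ∑_{n≥1} x_n/4^n : ∀n, x_n ∈ {0,2,3,5} } ⊆ [0, 5/3] has Lebesgue measure 1. -/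
/-!
Write `X` for the Cantorval. Splitting off the first digit gives `X = ⋃ₑ (e + X) / 4` over
`e ∈ {0, 2, 3, 5}`, and `x ↦ 5/3 - x` maps `X` onto itself.

The closed set `{0, 1} + X` is mapped into itself by `y ↦ (e + y) / 4` for `e = 2, …, 6`, because
`{2, …, 7} ⊆ 4 • {0, 1} + {0, 2, 3, 5}`; and the images of `[2/3, 2]` under these five maps cover
`[2/3, 2]`. Iterating, every point of `[2/3, 2]` is a limit of points of `{0, 1} + X`, so
`[2/3, 2] ⊆ {0, 1} + X` and in particular `[2/3, 1] ⊆ X`.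

Let `g` be the measure of `X ∩ [0, 2/3)`. A point of `X` below `2/3` has first digit `0`, or first
digit `2` followed by a point of `X` below `2/3`, so `g = |X| / 4 + g / 4`. By the symmetry,
`X ∩ (1, 5/3]` has measure `g` as well, hence `|X| = 2 g + 1/3`, and the two equations give `|X| = 1`.
-/

open Set MeasureTheory Filter Topology
open scoped Pointwise

lemma hasSum_div_four_pow (c : ℝ) : HasSum (fun n : ℕ => c / 4 ^ (n + 1)) (c / 3) := by
  have h := (hasSum_geometric_of_lt_one (by norm_num) (by norm_num : (4⁻¹ : ℝ) < 1)).mul_left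
    (c / 4)
  have hf : (fun n : ℕ => c / 4 * 4⁻¹ ^ n) = fun n => c / 4 ^ (n + 1) := by
    funext n
    rw [pow_succ, inv_pow]
    ring
  rwa [hf, show c / 4 * (1 - 4⁻¹)⁻¹ = c / 3 by norm_num; ring] at h

lemma hasSum_tail_div_four_pow_iff {d : ℕ → ℝ} {y : ℝ} :
    HasSum (fun n => d (n + 1) / 4 ^ (n + 1)) y ↔
      HasSum (fun n => d n / 4 ^ (n + 1)) ((d 0 + y) / 4) := by
  have hf : (fun n => 4⁻¹ * (d (n + 1) / 4 ^ (n + 1))) =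
      fun n => d (n + 1) / 4 ^ (n + 1 + 1) := by
    funext n
    rw [pow_succ]
    ring
  have hy : 4⁻¹ * y = (d 0 + y) / 4 - ∑ i ∈ Finset.range 1, d i / 4 ^ (i + 1) := by
    rw [Finset.sum_range_one]
    ring
  rw [← hasSum_mul_left_iff (show (4⁻¹ : ℝ) ≠ 0 by norm_num), hf, hy]
  exact hasSum_nat_add_iff' 1

lemma subset_of_isClosed_of_covered {q C : ℝ} (hq : 1 < q) {E I K : Set ℝ} (hK : IsClosed K)
    (hKE : ∀ e ∈ E, ∀ y ∈ K, (e + y) / q ∈ K) (hIE : ∀ w ∈ I, ∃ e ∈ E, q * w - e ∈ I)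
    (hC : ∀ w ∈ I, ∃ y ∈ K, |w - y| ≤ C) : I ⊆ K := by
  have hq0 : 0 < q := by linarith
  have approx : ∀ n : ℕ, ∀ w ∈ I, ∃ y ∈ K, |w - y| ≤ C / q ^ n := by
    intro n
    induction n with
    | zero => simpa using hC
    | succ n ih =>
      intro w hw
      obtain ⟨e, he, hw'⟩ := hIE w hw
      obtain ⟨y, hy, hwy⟩ := ih _ hw'
      refine ⟨(e + y) / q, hKE e he y hy, ?_⟩
      calc |w - (e + y) / q| = |q * w - e - y| / q := by
            rw [show w - (e + y) / q = (q * w - e - y) / q by field_simp; ring, abs_div,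
              abs_of_pos hq0]
        _ ≤ C / q ^ n / q := by gcongr
        _ = C / q ^ (n + 1) := by rw [pow_succ, div_div]
  intro w hw
  rw [← hK.closure_eq, Metric.mem_closure_iff]
  intro ε hε
  have hlim : Tendsto (fun n : ℕ => C / q ^ n) atTop (𝓝 0) :=
    tendsto_const_nhds.div_atTop (tendsto_pow_atTop_atTop_of_one_lt hq)
  obtain ⟨n, hn⟩ := (hlim.eventually (gt_mem_nhds hε)).exists
  obtain ⟨y, hy, hwy⟩ := approx n w hw
  exact ⟨y, hy, ((Real.dist_eq w y).trans_le hwy).trans_lt hn⟩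

lemma volume_real_image_div_four (c : ℝ) (s : Set ℝ) :
    volume.real ((fun y => (c + y) / 4) '' s) = volume.real s / 4 := by
  have h : (fun y : ℝ => (c + y) / 4) = AffineMap.homothety (c / 3) (4⁻¹ : ℝ) := by
    ext y
    simp only [AffineMap.homothety_apply, vsub_eq_sub, smul_eq_mul, vadd_eq_add]
    ring
  rw [measureReal_def, h, Measure.addHaar_image_homothety, ENNReal.toReal_mul, ← measureReal_def]
  norm_num
  ring

lemma digit_mem_Icc {d : ℝ} (hd : d ∈ ({0, 2, 3, 5} : Set ℝ)) : d ∈ Icc 0 5 := by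
  simp only [mem_insert_iff, mem_singleton_iff] at hd
  rcases hd with rfl | rfl | rfl | rfl <;> norm_num

lemma summable_digits {d : ℕ → ℝ} (hd : ∀ n, d n ∈ ({0, 2, 3, 5} : Set ℝ)) :
    Summable (fun n => d n / 4 ^ (n + 1)) :=
  (hasSum_div_four_pow 5).summable.of_nonneg_of_le
    (fun n => div_nonneg (digit_mem_Icc (hd n)).1 (by positivity))
    (fun n => div_le_div_of_nonneg_right (digit_mem_Icc (hd n)).2 (by positivity))

lemma mem_cantorval_iff_hasSum {x : ℝ} : x ∈ cantorval ↔
    ∃ d : ℕ → ℝ, (∀ n, d n ∈ ({0, 2, 3, 5} : Set ℝ)) ∧ HasSum (fun n => d n / 4 ^ (n + 1)) x :=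
  exists_congr fun _ => and_congr_right fun hd =>
    ⟨fun hx => hx ▸ (summable_digits hd).hasSum, fun h => h.tsum_eq.symm⟩

lemma mem_cantorval_iff_exists_digit {x : ℝ} : x ∈ cantorval ↔
    ∃ e ∈ ({0, 2, 3, 5} : Set ℝ), ∃ y ∈ cantorval, x = (e + y) / 4 := by
  simp only [mem_cantorval_iff_hasSum]
  constructor
  · rintro ⟨d, hd, hx⟩
    have hy := (summable_digits fun n => hd (n + 1)).hasSum
    exact ⟨d 0, hd 0, _, ⟨_, fun n => hd (n + 1), hy⟩,
      hx.unique (hasSum_tail_div_four_pow_iff.mp hy)⟩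
  · rintro ⟨e, he, y, ⟨d, hd, hy⟩, rfl⟩
    refine ⟨fun | 0 => e | n + 1 => d n, fun | 0 => he | n + 1 => hd n, ?_⟩
    exact hasSum_tail_div_four_pow_iff (d := fun | 0 => e | n + 1 => d n) |>.mp hy

lemma div_three_mem_cantorval {c : ℝ} (hc : c ∈ ({0, 2, 3, 5} : Set ℝ)) : c / 3 ∈ cantorval :=
  mem_cantorval_iff_hasSum.mpr ⟨fun _ => c, fun _ => hc, hasSum_div_four_pow c⟩

lemma cantorval_subset_Icc : cantorval ⊆ Icc 0 (5 / 3) := by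
  intro x hx
  obtain ⟨d, hd, hx⟩ := mem_cantorval_iff_hasSum.mp hx
  refine ⟨hx.nonneg fun n => div_nonneg (digit_mem_Icc (hd n)).1 (by positivity), ?_⟩
  exact hasSum_le (fun n => div_le_div_of_nonneg_right (digit_mem_Icc (hd n)).2 (by positivity))
    hx (hasSum_div_four_pow 5)

lemma sub_mem_cantorval {x : ℝ} (hx : x ∈ cantorval) : 5 / 3 - x ∈ cantorval := by
  obtain ⟨d, hd, hx⟩ := mem_cantorval_iff_hasSum.mp hx
  refine mem_cantorval_iff_hasSum.mpr ⟨fun n => 5 - d n, fun n => ?_, ?_⟩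
  · have h := hd n
    simp only [mem_insert_iff, mem_singleton_iff] at h ⊢
    rcases h with h | h | h | h <;> rw [h] <;> norm_num
  · simpa only [sub_div] using (hasSum_div_four_pow 5).sub hx

lemma isCompact_cantorval : IsCompact cantorval := by
  let D : Set ℝ := {0, 2, 3, 5}
  have : CompactSpace D := isCompact_iff_compactSpace.mp (toFinite D).isCompact
  have hrange : cantorval = range fun d : ℕ → D => ∑' n, (d n : ℝ) / 4 ^ (n + 1) := by
    ext x
    constructor
    · rintro ⟨d, hd, rfl⟩
      exact ⟨fun n => ⟨d n, hd n⟩, rfl⟩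
    · rintro ⟨d, rfl⟩
      exact ⟨fun n => d n, fun n => (d n).2, rfl⟩
  rw [hrange]
  refine isCompact_range (continuous_tsum (fun n => ?_) (hasSum_div_four_pow 5).summable
    fun n d => ?_)
  · exact (continuous_subtype_val.comp (continuous_apply n)).div_const _
  · have h := digit_mem_Icc (d n).2
    rw [Real.norm_of_nonneg (div_nonneg h.1 (by positivity))]
    exact div_le_div_of_nonneg_right h.2 (by positivity)

lemma div_four_mem_add_cantorval {s x : ℝ} (hs : s ∈ ({2, 3, 4, 5, 6, 7} : Set ℝ))
    (hx : x ∈ cantorval) : (s + x) / 4 ∈ ({0, 1} : Set ℝ) + cantorval := by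
  obtain ⟨j, hj, e, he, rfl⟩ :
      ∃ j ∈ ({0, 1} : Set ℝ), ∃ e ∈ ({0, 2, 3, 5} : Set ℝ), s = 4 * j + e := by
    simp only [mem_insert_iff, mem_singleton_iff] at hs ⊢
    rcases hs with rfl | rfl | rfl | rfl | rfl | rfl <;> norm_num
  exact mem_add.mpr
    ⟨j, hj, (e + x) / 4, mem_cantorval_iff_exists_digit.mpr ⟨e, he, x, hx, rfl⟩, by ring⟩

lemma Icc_subset_add_cantorval : Icc (2 / 3) 2 ⊆ ({0, 1} : Set ℝ) + cantorval := by
  refine subset_of_isClosed_of_covered (q := 4) (C := 4 / 3) (E := {2, 3, 4, 5, 6})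
    (by norm_num) ((toFinite _).isCompact.add isCompact_cantorval).isClosed ?_ ?_ ?_
  · intro e he y hy
    obtain ⟨j, hj, x, hx, rfl⟩ := mem_add.mp hy
    rw [show (e + (j + x)) / 4 = (e + j + x) / 4 by ring]
    refine div_four_mem_add_cantorval ?_ hx
    simp only [mem_insert_iff, mem_singleton_iff] at he hj ⊢
    rcases he with rfl | rfl | rfl | rfl | rfl <;> rcases hj with rfl | rfl <;> norm_num
  · rintro w ⟨hw1, hw2⟩
    simp only [mem_insert_iff, mem_singleton_iff, exists_eq_or_imp, exists_eq_left, mem_Icc]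
    by_cases h1 : w ≤ 1
    · left; constructor <;> linarith
    by_cases h2 : w ≤ 5 / 4
    · right; left; constructor <;> linarith
    by_cases h3 : w ≤ 3 / 2
    · right; right; left; constructor <;> linarith
    by_cases h4 : w ≤ 7 / 4
    · right; right; right; left; constructor <;> linarith
    · right; right; right; right; constructor <;> linarith
  · rintro w ⟨hw1, hw2⟩
    refine ⟨2 / 3, mem_add.mpr ⟨0, by norm_num, 2 / 3, div_three_mem_cantorval (by norm_num),
      by ring⟩, ?_⟩
    rw [abs_le]
    constructor <;> linarith

lemma Icc_subset_cantorval : Icc (2 / 3) 1 ⊆ cantorval := by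
  intro t ⟨ht1, ht2⟩
  obtain ⟨j, hj, x, hx, rfl⟩ := mem_add.mp (Icc_subset_add_cantorval ⟨ht1, by linarith⟩)
  simp only [mem_insert_iff, mem_singleton_iff] at hj
  rcases hj with rfl | rfl
  · rwa [zero_add]
  · obtain rfl : x = 0 := by linarith [(cantorval_subset_Icc hx).1]
    simpa using div_three_mem_cantorval (c := 3) (by norm_num)

lemma cantorval_inter_Iio_eq : cantorval ∩ Iio (2 / 3) =
    (fun y => (0 + y) / 4) '' cantorval ∪ (fun y => (2 + y) / 4) '' (cantorval ∩ Iio (2 / 3)) := by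
  ext x
  simp only [mem_inter_iff, mem_union, mem_image, mem_Iio]
  constructor
  · rintro ⟨hx, hlt⟩
    obtain ⟨e, he, y, hy, rfl⟩ := mem_cantorval_iff_exists_digit.mp hx
    have hy0 := (cantorval_subset_Icc hy).1
    simp only [mem_insert_iff, mem_singleton_iff] at he
    rcases he with rfl | rfl | rfl | rfl
    · exact Or.inl ⟨y, hy, rfl⟩
    · exact Or.inr ⟨y, ⟨hy, by linarith⟩, rfl⟩
    all_goals linarith
  · rintro (⟨y, hy, rfl⟩ | ⟨y, ⟨hy, hlt⟩, rfl⟩)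
    · exact ⟨mem_cantorval_iff_exists_digit.mpr ⟨0, by norm_num, y, hy, rfl⟩,
        by linarith [(cantorval_subset_Icc hy).2]⟩
    · exact ⟨mem_cantorval_iff_exists_digit.mpr ⟨2, by norm_num, y, hy, rfl⟩, by linarith⟩

lemma cantorval_inter_Ioi_eq :
    cantorval ∩ Ioi 1 = (fun x => 5 / 3 - x) ⁻¹' (cantorval ∩ Iio (2 / 3)) := by
  ext x
  simp only [mem_inter_iff, mem_preimage, mem_Iio, mem_Ioi]
  refine ⟨fun ⟨hx, h⟩ => ⟨sub_mem_cantorval hx, by linarith⟩, fun ⟨hx, h⟩ => ⟨?_, by linarith⟩⟩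
  simpa using sub_mem_cantorval hx

lemma cantorval_eq_union :
    cantorval = cantorval ∩ Iio (2 / 3) ∪ Icc (2 / 3) 1 ∪ cantorval ∩ Ioi 1 := by
  refine Subset.antisymm (fun x hx => ?_)
    (union_subset (union_subset inter_subset_left Icc_subset_cantorval) inter_subset_left)
  rcases lt_or_ge x (2 / 3) with h1 | h1
  · exact Or.inl (Or.inl ⟨hx, h1⟩)
  rcases le_or_gt x 1 with h2 | h2
  · exact Or.inl (Or.inr ⟨h1, h2⟩)
  · exact Or.inr ⟨hx, h2⟩

lemma volume_ne_top_of_subset_cantorval {s : Set ℝ} (hs : s ⊆ cantorval) : volume s ≠ ⊤ :=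
  measure_ne_top_of_subset hs isCompact_cantorval.measure_lt_top.ne

lemma volume_real_cantorval_inter_Iio : volume.real (cantorval ∩ Iio (2 / 3)) =
    volume.real cantorval / 4 + volume.real (cantorval ∩ Iio (2 / 3)) / 4 := by
  have hdisj : Disjoint ((fun y => (0 + y) / 4) '' cantorval)
      ((fun y => (2 + y) / 4) '' (cantorval ∩ Iio (2 / 3))) := by
    rw [disjoint_left]
    rintro _ ⟨y, hy, rfl⟩ ⟨z, ⟨hz, -⟩, hzy⟩
    linarith [(cantorval_subset_Icc hy).2, (cantorval_subset_Icc hz).1]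
  have hsub := cantorval_inter_Iio_eq.symm.subset.trans inter_subset_left
  conv_lhs => rw [cantorval_inter_Iio_eq]
  rw [measureReal_union' hdisj ((isCompact_cantorval.image (by fun_prop)).isClosed.measurableSet)
    (volume_ne_top_of_subset_cantorval (subset_union_left.trans hsub))
    (volume_ne_top_of_subset_cantorval (subset_union_right.trans hsub)),
    volume_real_image_div_four, volume_real_image_div_four]

lemma volume_real_cantorval :
    volume.real cantorval = 2 * volume.real (cantorval ∩ Iio (2 / 3)) + 1 / 3 := by
  have hmeas : MeasurableSet cantorval := isCompact_cantorval.isClosed.measurableSet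
  have hdisj₁ : Disjoint (cantorval ∩ Iio (2 / 3) ∪ Icc (2 / 3) 1) (cantorval ∩ Ioi 1) := by
    rw [disjoint_left]
    rintro x (⟨-, h : x < 2 / 3⟩ | ⟨-, h : x ≤ 1⟩) ⟨-, h' : 1 < x⟩ <;> linarith
  have hdisj₂ : Disjoint (cantorval ∩ Iio (2 / 3)) (Icc (2 / 3) 1) := by
    rw [disjoint_left]
    rintro x ⟨-, h : x < 2 / 3⟩ ⟨h', -⟩
    linarith
  conv_lhs => rw [cantorval_eq_union]
  rw [measureReal_union hdisj₁ (hmeas.inter measurableSet_Ioi)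
      (volume_ne_top_of_subset_cantorval (union_subset inter_subset_left Icc_subset_cantorval))
      (volume_ne_top_of_subset_cantorval inter_subset_left),
    measureReal_union hdisj₂ measurableSet_Icc
      (volume_ne_top_of_subset_cantorval inter_subset_left)
      (volume_ne_top_of_subset_cantorval Icc_subset_cantorval),
    cantorval_inter_Ioi_eq, (volume.measurePreserving_sub_left (5 / 3)).measureReal_preimage
      (hmeas.inter measurableSet_Iio).nullMeasurableSet,
    Real.volume_real_Icc_of_le (by norm_num)]
  ring

theorem stmt11 :
    cantorval ⊆ Set.Icc 0 (5 / 3) ∧ MeasureTheory.volume cantorval = 1 := by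
  refine ⟨cantorval_subset_Icc, ?_⟩
  have h : volume.real cantorval = 1 := by
    linarith [volume_real_cantorval, volume_real_cantorval_inter_Iio]
  rw [← ofReal_measureReal (volume_ne_top_of_subset_cantorval subset_rfl), h, ENNReal.ofReal_one]
end

section
/- Every point of the Cantorval X = { ∑_{n≥1} x_n/4^n : ∀n, x_n ∈ {0,2,3,5} } has at most two digital representations. -/
noncomputable def quaternaryTail (δ : ℕ → ℝ) (j : ℕ) : ℝ :=
  ∑' k : ℕ, δ (j + k) / 4 ^ (k + 1)

section Tail

variable {δ ε : ℕ → ℝ} {C : ℝ}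

lemma norm_div_four_pow_succ_le (hδ : ∀ n, |δ n| ≤ C) (n : ℕ) :
    ‖δ n / 4 ^ (n + 1)‖ ≤ C / 4 ^ (n + 1) := by
  rw [norm_div, norm_pow, Real.norm_ofNat, Real.norm_eq_abs]
  exact div_le_div_of_nonneg_right (hδ n) (by positivity)

lemma hasSum_div_four_pow_succ (C : ℝ) : HasSum (fun n : ℕ => C / 4 ^ (n + 1)) (C / 3) := by
  have hterm : (fun n : ℕ => C / 4 ^ (n + 1)) = fun n => C / 4 * 4⁻¹ ^ n := by
    ext n; rw [inv_pow, pow_succ]; ring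
  rw [hterm, show C / 3 = C / 4 * (1 - 4⁻¹)⁻¹ by ring]
  exact (hasSum_geometric_of_lt_one (by norm_num) (by norm_num)).mul_left _

lemma summable_div_four_pow_succ (hδ : ∀ n, |δ n| ≤ C) :
    Summable fun n : ℕ => δ n / 4 ^ (n + 1) :=
  .of_norm_bounded (hasSum_div_four_pow_succ C).summable (norm_div_four_pow_succ_le hδ)

lemma abs_tsum_div_four_pow_succ_le (hδ : ∀ n, |δ n| ≤ C) :
    |∑' n : ℕ, δ n / 4 ^ (n + 1)| ≤ C / 3 := by
  rw [← Real.norm_eq_abs]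
  exact tsum_of_norm_bounded (hasSum_div_four_pow_succ C) (norm_div_four_pow_succ_le hδ)

lemma quaternaryTail_zero (δ : ℕ → ℝ) :
    quaternaryTail δ 0 = ∑' n : ℕ, δ n / 4 ^ (n + 1) := by
  simp only [quaternaryTail, zero_add]

lemma summable_quaternaryTail (hδ : ∀ n, |δ n| ≤ C) (j : ℕ) :
    Summable fun k : ℕ => δ (j + k) / 4 ^ (k + 1) :=
  summable_div_four_pow_succ fun k => hδ (j + k)

lemma abs_quaternaryTail_le (hδ : ∀ n, |δ n| ≤ C) (j : ℕ) :
    |quaternaryTail δ j| ≤ C / 3 :=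
  abs_tsum_div_four_pow_succ_le fun k => hδ (j + k)

lemma four_mul_quaternaryTail (hδ : ∀ n, |δ n| ≤ C) (j : ℕ) :
    4 * quaternaryTail δ j = δ j + quaternaryTail δ (j + 1) := by
  rw [quaternaryTail, (summable_quaternaryTail hδ j).tsum_eq_zero_add, quaternaryTail,
    mul_add, ← tsum_mul_left]
  congr 1
  · simp only [add_zero, zero_add, pow_one]; ring
  · refine tsum_congr fun k => ?_
    rw [show j + (k + 1) = j + 1 + k by omega, pow_succ]
    ring

lemma quaternaryTail_add (hδ : ∀ n, |δ n| ≤ C) (hε : ∀ n, |ε n| ≤ C) (j : ℕ) :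
    quaternaryTail (δ + ε) j = quaternaryTail δ j + quaternaryTail ε j := by
  rw [quaternaryTail, quaternaryTail, quaternaryTail,
    ← (summable_quaternaryTail hδ j).tsum_add (summable_quaternaryTail hε j)]
  simp only [Pi.add_apply, add_div]

lemma quaternaryTail_succ_ne_zero (hδ : ∀ n, |δ n| ≤ C) {j : ℕ} (h4 : |δ j| ≠ 4)
    (hj : |quaternaryTail δ j| = 1) : quaternaryTail δ (j + 1) ≠ 0 := by
  intro hzero
  have hrec := four_mul_quaternaryTail hδ j
  rw [hzero, add_zero] at hrec
  apply h4
  rw [← hrec, abs_mul, hj]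
  norm_num

lemma exists_int_quaternaryTail_eq (hδ : ∀ n, |δ n| ≤ 5) (hint : ∀ n, ∃ m : ℤ, δ n = m)
    (h0 : quaternaryTail δ 0 = 0) (j : ℕ) :
    ∃ z : ℤ, quaternaryTail δ j = z ∧ |z| ≤ 1 := by
  have hint_tail : ∀ j, ∃ z : ℤ, quaternaryTail δ j = z := by
    intro j
    induction j with
    | zero => exact ⟨0, by rw [h0, Int.cast_zero]⟩
    | succ j ih =>
      obtain ⟨z, hz⟩ := ih
      obtain ⟨m, hm⟩ := hint j
      refine ⟨4 * z - m, ?_⟩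
      push_cast
      linarith [four_mul_quaternaryTail hδ j]
  obtain ⟨z, hz⟩ := hint_tail j
  refine ⟨z, hz, ?_⟩
  have hlt : |(z : ℝ)| < 2 := by
    rw [← hz]
    linarith [abs_quaternaryTail_le hδ j]
  have : |z| < 2 := by exact_mod_cast hlt
  linarith

end Tail

lemma exists_int_of_mem_digits {u : ℝ} (hu : u ∈ ({0, 2, 3, 5} : Set ℝ)) :
    ∃ k : ℤ, u = k ∧ k ∈ ({0, 2, 3, 5} : Finset ℤ) := by
  rcases hu with rfl | rfl | rfl | rfl
  exacts [⟨0, by simp, by decide⟩, ⟨2, by simp, by decide⟩, ⟨3, by simp, by decide⟩,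
    ⟨5, by simp, by decide⟩]

lemma abs_le_five_of_mem_digits {u : ℝ} (hu : u ∈ ({0, 2, 3, 5} : Set ℝ)) : |u| ≤ 5 := by
  obtain ⟨k, rfl, hk⟩ := exists_int_of_mem_digits hu
  have key : ∀ k ∈ ({0, 2, 3, 5} : Finset ℤ), |k| ≤ 5 := by decide
  exact_mod_cast key k hk

lemma exists_int_sub_of_mem_digits {u v : ℝ} (hu : u ∈ ({0, 2, 3, 5} : Set ℝ))
    (hv : v ∈ ({0, 2, 3, 5} : Set ℝ)) : ∃ m : ℤ, v - u = m ∧ |m| ≤ 5 ∧ |m| ≠ 4 := by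
  obtain ⟨k, rfl, hk⟩ := exists_int_of_mem_digits hu
  obtain ⟨l, rfl, hl⟩ := exists_int_of_mem_digits hv
  have key : ∀ k ∈ ({0, 2, 3, 5} : Finset ℤ), ∀ l ∈ ({0, 2, 3, 5} : Finset ℤ),
      |l - k| ≤ 5 ∧ |l - k| ≠ 4 := by
    decide
  exact ⟨l - k, by push_cast; rfl, key k hk l hl⟩

section DigitPair

variable {a b : ℕ → ℝ}

lemma abs_sub_le_five_of_mem_digits (ha : ∀ n, a n ∈ ({0, 2, 3, 5} : Set ℝ))
    (hb : ∀ n, b n ∈ ({0, 2, 3, 5} : Set ℝ)) (n : ℕ) : |(b - a) n| ≤ 5 := by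
  obtain ⟨m, hm, hm5, -⟩ := exists_int_sub_of_mem_digits (ha n) (hb n)
  rw [Pi.sub_apply, hm]
  exact_mod_cast hm5

lemma quaternaryTail_sub_zero_eq_zero (ha : ∀ n, a n ∈ ({0, 2, 3, 5} : Set ℝ))
    (hb : ∀ n, b n ∈ ({0, 2, 3, 5} : Set ℝ))
    (hab : ∑' n : ℕ, a n / 4 ^ (n + 1) = ∑' n : ℕ, b n / 4 ^ (n + 1)) :
    quaternaryTail (b - a) 0 = 0 := by
  have hsplit := quaternaryTail_add (abs_sub_le_five_of_mem_digits ha hb)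
    (fun n => abs_le_five_of_mem_digits (ha n)) 0
  rw [sub_add_cancel, quaternaryTail_zero b, quaternaryTail_zero a, ← hab] at hsplit
  linarith

lemma exists_int_quaternaryTail_sub_eq (ha : ∀ n, a n ∈ ({0, 2, 3, 5} : Set ℝ))
    (hb : ∀ n, b n ∈ ({0, 2, 3, 5} : Set ℝ))
    (hab : ∑' n : ℕ, a n / 4 ^ (n + 1) = ∑' n : ℕ, b n / 4 ^ (n + 1)) (j : ℕ) :
    ∃ z : ℤ, quaternaryTail (b - a) j = z ∧ |z| ≤ 1 :=
  exists_int_quaternaryTail_eq (abs_sub_le_five_of_mem_digits ha hb)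
    (fun n => (exists_int_sub_of_mem_digits (ha n) (hb n)).imp fun _ h => h.1)
    (quaternaryTail_sub_zero_eq_zero ha hb hab) j

lemma abs_quaternaryTail_sub_eq_one_of_le (ha : ∀ n, a n ∈ ({0, 2, 3, 5} : Set ℝ))
    (hb : ∀ n, b n ∈ ({0, 2, 3, 5} : Set ℝ))
    (hab : ∑' n : ℕ, a n / 4 ^ (n + 1) = ∑' n : ℕ, b n / 4 ^ (n + 1))
    {i j : ℕ} (hij : i ≤ j)
    (hi : |quaternaryTail (b - a) i| = 1) : |quaternaryTail (b - a) j| = 1 := by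
  induction j, hij using Nat.le_induction with
  | base => exact hi
  | succ k _ hk =>
    have h4 : |(b - a) k| ≠ 4 := by
      obtain ⟨m, hm, -, hm4⟩ := exists_int_sub_of_mem_digits (ha k) (hb k)
      rw [Pi.sub_apply, hm]
      exact_mod_cast hm4
    have hne := quaternaryTail_succ_ne_zero (abs_sub_le_five_of_mem_digits ha hb) h4 hk
    obtain ⟨z, hz, hz1⟩ := exists_int_quaternaryTail_sub_eq ha hb hab (k + 1)
    have hz0 : z ≠ 0 := by
      rintro rfl
      exact hne (by rw [hz, Int.cast_zero])
    rw [hz]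
    exact_mod_cast le_antisymm hz1 (Int.one_le_abs hz0)

lemma exists_abs_quaternaryTail_sub_eq_one (ha : ∀ n, a n ∈ ({0, 2, 3, 5} : Set ℝ))
    (hb : ∀ n, b n ∈ ({0, 2, 3, 5} : Set ℝ))
    (hab : ∑' n : ℕ, a n / 4 ^ (n + 1) = ∑' n : ℕ, b n / 4 ^ (n + 1)) (hne : a ≠ b) :
    ∃ i, |quaternaryTail (b - a) i| = 1 := by
  by_contra! hall
  have hzero : ∀ i, quaternaryTail (b - a) i = 0 := by
    intro i
    obtain ⟨z, hz, hz1⟩ := exists_int_quaternaryTail_sub_eq ha hb hab i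
    have hz' : |z| ≠ 1 := fun h => hall i (by rw [hz]; exact_mod_cast h)
    rw [hz, Int.abs_lt_one_iff.1 (hz1.lt_of_ne hz'), Int.cast_zero]
  refine hne (funext fun n => ?_)
  have hrec := four_mul_quaternaryTail (abs_sub_le_five_of_mem_digits ha hb) n
  rw [hzero, hzero, Pi.sub_apply] at hrec
  linarith

lemma eventually_abs_quaternaryTail_sub_eq_one (ha : ∀ n, a n ∈ ({0, 2, 3, 5} : Set ℝ))
    (hb : ∀ n, b n ∈ ({0, 2, 3, 5} : Set ℝ))
    (hab : ∑' n : ℕ, a n / 4 ^ (n + 1) = ∑' n : ℕ, b n / 4 ^ (n + 1)) (hne : a ≠ b) :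
    ∀ᶠ j in Filter.atTop, |quaternaryTail (b - a) j| = 1 := by
  obtain ⟨i, hi⟩ := exists_abs_quaternaryTail_sub_eq_one ha hb hab hne
  exact Filter.eventually_atTop.2
    ⟨i, fun _ hij => abs_quaternaryTail_sub_eq_one_of_le ha hb hab hij hi⟩

end DigitPair

lemma abs_add_ne_one_of_abs_eq_one {x y : ℝ} (hx : |x| = 1) (hy : |y| = 1) : |x + y| ≠ 1 := by
  rcases abs_eq_abs.1 (hx.trans hy.symm) with rfl | rfl
  · rw [← two_mul, abs_mul, hy]; norm_num
  · rw [neg_add_cancel, abs_zero]; norm_num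

theorem stmt19_general (x : ℝ)
    (d e f : ℕ → ℝ)
    (hd : ∀ n, d n ∈ ({0, 2, 3, 5} : Set ℝ)) (hd' : x = ∑' n : ℕ, d n / 4 ^ (n + 1))
    (he : ∀ n, e n ∈ ({0, 2, 3, 5} : Set ℝ)) (he' : x = ∑' n : ℕ, e n / 4 ^ (n + 1))
    (hf : ∀ n, f n ∈ ({0, 2, 3, 5} : Set ℝ)) (hf' : x = ∑' n : ℕ, f n / 4 ^ (n + 1)) :
    d = e ∨ d = f ∨ e = f := by
  by_contra! hne
  obtain ⟨hde, hdf, hef⟩ := hne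
  obtain ⟨j, hde_j, hef_j, hdf_j⟩ :=
    ((eventually_abs_quaternaryTail_sub_eq_one hd he (hd'.symm.trans he') hde).and
      ((eventually_abs_quaternaryTail_sub_eq_one he hf (he'.symm.trans hf') hef).and
        (eventually_abs_quaternaryTail_sub_eq_one hd hf (hd'.symm.trans hf') hdf))).exists
  have hsum : quaternaryTail (e - d) j + quaternaryTail (f - e) j = quaternaryTail (f - d) j := by
    rw [← quaternaryTail_add (abs_sub_le_five_of_mem_digits hd he)
      (abs_sub_le_five_of_mem_digits he hf), sub_add_sub_cancel']
  exact abs_add_ne_one_of_abs_eq_one hde_j hef_j (hsum ▸ hdf_j)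

theorem stmt19 (x : ℝ) (hx : x ∈ cantorval)
    (d e f : ℕ → ℝ)
    (hd : ∀ n, d n ∈ ({0, 2, 3, 5} : Set ℝ)) (hd' : x = ∑' n : ℕ, d n / 4 ^ (n + 1))
    (he : ∀ n, e n ∈ ({0, 2, 3, 5} : Set ℝ)) (he' : x = ∑' n : ℕ, e n / 4 ^ (n + 1))
    (hf : ∀ n, f n ∈ ({0, 2, 3, 5} : Set ℝ)) (hf' : x = ∑' n : ℕ, f n / 4 ^ (n + 1)) :
    d = e ∨ d = f ∨ e = f :=
  stmt19_general x d e f hd hd' he he' hf hf'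
end
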